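/- A functional ρ : X → ℝ is a monetary risk measure (monotone and cash additive) if and only if ρ(X) = min_{Z ∈ A_ρ} ess-sup(X − Z) for all X ∈ X, where A_ρ = {Z ∈ X : ρ(Z) ≤ 0} is the acceptance set of ρ. -/

import Mathlib

open MeasureTheory

variable {Ω : Type*} [MeasurableSpace Ω]

noncomputable def cst (μ : Measure Ω) [IsFiniteMeasure μ] (c : ℝ) : Lp ℝ ⊤ μ :=
  Lp.const ⊤ μ c

noncomputable def esssup (μ : Measure Ω) [IsFiniteMeasure μ] (X : Lp ℝ ⊤ μ) : ℝ :=
  sInf {c : ℝ | X ≤ cst μ c}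

section Aux

variable (μ : Measure Ω) [IsProbabilityMeasure μ]

lemma cst_add (a b : ℝ) : cst μ (a + b) = cst μ a + cst μ b :=
  map_add (Lp.const ⊤ μ) a b

lemma cst_neg (a : ℝ) : cst μ (-a) = -cst μ a :=
  map_neg (Lp.const ⊤ μ) a

lemma cst_zero : cst μ (0 : ℝ) = 0 :=
  map_zero (Lp.const ⊤ μ)

lemma le_cst_iff {W : Lp ℝ ⊤ μ} {c : ℝ} : W ≤ cst μ c ↔ ∀ᵐ ω ∂μ, W ω ≤ c := by
  rw [← Lp.coeFn_le]
  constructor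
  · intro h
    filter_upwards [h, Lp.coeFn_const (E := ℝ) (p := (⊤ : ENNReal)) (μ := μ) (c := c)]
      with ω h1 h2
    exact le_of_le_of_eq h1 h2
  · intro h
    filter_upwards [h, Lp.coeFn_const (E := ℝ) (p := (⊤ : ENNReal)) (μ := μ) (c := c)]
      with ω h1 h2
    exact le_of_le_of_eq h1 h2.symm

lemma ae_norm_le (W : Lp ℝ ⊤ μ) : ∀ᵐ ω ∂μ, |(W : Ω → ℝ) ω| ≤ ‖W‖ := by
  have h := ae_le_eLpNormEssSup (f := (W : Ω → ℝ)) (μ := μ)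
  have hfin : eLpNormEssSup (W : Ω → ℝ) μ ≠ ⊤ := by
    rw [← eLpNorm_exponent_top]; exact Lp.eLpNorm_ne_top W
  filter_upwards [h] with ω hω
  have h1 : ‖(W : Ω → ℝ) ω‖₊ ≤ (eLpNormEssSup (W : Ω → ℝ) μ).toNNReal := by
    rw [← ENNReal.coe_le_coe, ENNReal.coe_toNNReal hfin]; exact hω
  calc |(W : Ω → ℝ) ω| = ‖(W : Ω → ℝ) ω‖ := (Real.norm_eq_abs _).symm
    _ ≤ (eLpNormEssSup (W : Ω → ℝ) μ).toReal := by exact_mod_cast h1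
    _ = ‖W‖ := by rw [Lp.norm_def, eLpNorm_exponent_top]

lemma mem_S (W : Lp ℝ ⊤ μ) : W ≤ cst μ ‖W‖ := by
  rw [le_cst_iff]
  filter_upwards [ae_norm_le μ W] with ω hω
  exact le_trans (le_abs_self _) hω

lemma lb_S {W : Lp ℝ ⊤ μ} {c : ℝ} (h : W ≤ cst μ c) : -‖W‖ ≤ c := by
  rw [le_cst_iff] at h
  have hae : ∀ᵐ ω ∂μ, -‖W‖ ≤ c := by
    filter_upwards [h, ae_norm_le μ W] with ω h1 h2
    have := neg_abs_le ((W : Ω → ℝ) ω)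
    linarith
  obtain ⟨ω, hω⟩ := hae.exists
  exact hω

lemma bddBelow_S (W : Lp ℝ ⊤ μ) : BddBelow {c : ℝ | W ≤ cst μ c} :=
  ⟨-‖W‖, fun _ hc => lb_S μ hc⟩

lemma nonempty_S (W : Lp ℝ ⊤ μ) : Set.Nonempty {c : ℝ | W ≤ cst μ c} :=
  ⟨‖W‖, mem_S μ W⟩

/-- The essential supremum bound is attained. -/
lemma le_cst_esssup (W : Lp ℝ ⊤ μ) : W ≤ cst μ (esssup μ W) := by
  unfold esssup
  have hmem : ∀ n : ℕ, ∀ᵐ ω ∂μ,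
      (W : Ω → ℝ) ω ≤ sInf {c : ℝ | W ≤ cst μ c} + 1 / (n + 1) := by
    intro n
    obtain ⟨c, hc, hlt⟩ := Real.lt_sInf_add_pos (nonempty_S μ W)
      (show (0:ℝ) < 1 / (n + 1) by positivity)
    rw [Set.mem_setOf_eq, le_cst_iff] at hc
    filter_upwards [hc] with ω hω
    exact hω.trans hlt.le
  rw [le_cst_iff]
  filter_upwards [ae_all_iff.2 hmem] with ω hω
  by_contra hcon
  push_neg at hcon
  obtain ⟨n, hn⟩ := exists_nat_one_div_lt
    (show (0:ℝ) < (W : Ω → ℝ) ω - sInf {c : ℝ | W ≤ cst μ c} by linarith)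
  have := hω n
  linarith

lemma esssup_le {W : Lp ℝ ⊤ μ} {c : ℝ} (h : W ≤ cst μ c) : esssup μ W ≤ c :=
  csInf_le (bddBelow_S μ W) h

lemma le_esssup {W : Lp ℝ ⊤ μ} {b : ℝ} (h : ∀ c, W ≤ cst μ c → b ≤ c) :
    b ≤ esssup μ W :=
  le_csInf (nonempty_S μ W) h

lemma esssup_add_cst (W : Lp ℝ ⊤ μ) (m : ℝ) :
    esssup μ (W + cst μ m) = esssup μ W + m := by
  apply le_antisymm
  · apply esssup_le
    have h := le_cst_esssup μ W
    calc W + cst μ m ≤ cst μ (esssup μ W) + cst μ m := add_le_add_left h _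
      _ = cst μ (esssup μ W + m) := (cst_add μ _ _).symm
  · apply le_esssup
    intro c hc
    have h' : W + cst μ m + cst μ (-m) ≤ cst μ c + cst μ (-m) := add_le_add_left hc _
    have e1 : W + cst μ m + cst μ (-m) = W := by
      rw [add_assoc, ← cst_add, add_neg_cancel, cst_zero, add_zero]
    have e2 : cst μ c + cst μ (-m) = cst μ (c - m) := by
      rw [← cst_add, ← sub_eq_add_neg]
    rw [e1, e2] at h'
    have := esssup_le μ h'
    linarith

lemma esssup_cst (c : ℝ) : esssup μ (cst μ c) = c := by
  apply le_antisymm (esssup_le μ le_rfl)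
  apply le_esssup
  intro c' hc'
  rw [le_cst_iff] at hc'
  have hae : ∀ᵐ ω ∂μ, c ≤ c' := by
    filter_upwards [hc', Lp.coeFn_const (E := ℝ) (p := (⊤ : ENNReal)) (μ := μ) (c := c)]
      with ω h1 h2
    exact le_of_eq_of_le h2.symm h1
  exact hae.exists.choose_spec

end Aux

/-- `ρ` is a monetary risk measure (monotone and cash additive) iff
`ρ(X) = min_{Z ∈ A_ρ} ess-sup(X - Z)` where `A_ρ = {Z : ρ(Z) ≤ 0}`. -/
theorem monetary_iff_min_over_acceptance (μ : Measure Ω) [IsProbabilityMeasure μ]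
    (ρ : Lp ℝ ⊤ μ → ℝ) :
    ((∀ U V : Lp ℝ ⊤ μ, U ≤ V → ρ U ≤ ρ V) ∧
     (∀ (U : Lp ℝ ⊤ μ) (m : ℝ), ρ (U + cst μ m) = ρ U + m)) ↔
    (∀ X : Lp ℝ ⊤ μ,
      IsLeast {r : ℝ | ∃ Z : Lp ℝ ⊤ μ, ρ Z ≤ 0 ∧ r = esssup μ (X - Z)} (ρ X)) := by
  constructor
  · rintro ⟨hmono, hcash⟩ X
    constructor
    · -- membership: take Z = X - cst (ρ X)
      refine ⟨X - cst μ (ρ X), ?_, ?_⟩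
      · have hrw : X - cst μ (ρ X) = X + cst μ (-(ρ X)) := by
          rw [sub_eq_add_neg, cst_neg]
        rw [hrw, hcash]
        linarith
      · have hrw : X - (X - cst μ (ρ X)) = cst μ (ρ X) := by abel
        rw [hrw, esssup_cst]
    · rintro r ⟨Z, hZ, rfl⟩
      have h1 : X - Z ≤ cst μ (esssup μ (X - Z)) := le_cst_esssup μ _
      have h2 : X ≤ Z + cst μ (esssup μ (X - Z)) := by
        have h3 := add_le_add_left h1 Z
        have e1 : X - Z + Z = X := by abel
        have e2 : cst μ (esssup μ (X - Z)) + Z = Z + cst μ (esssup μ (X - Z)) := by abel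
        rwa [e1, e2] at h3
      calc ρ X ≤ ρ (Z + cst μ (esssup μ (X - Z))) := hmono _ _ h2
        _ = ρ Z + esssup μ (X - Z) := hcash _ _
        _ ≤ esssup μ (X - Z) := by linarith
  · intro h
    constructor
    · intro U V hUV
      obtain ⟨⟨Z, hZ, hVeq⟩, _⟩ := h V
      have hUle : ρ U ≤ esssup μ (U - Z) := (h U).2 ⟨Z, hZ, rfl⟩
      have hmono : esssup μ (U - Z) ≤ esssup μ (V - Z) := by
        apply le_esssup
        intro c hc
        exact esssup_le μ (le_trans (sub_le_sub_right hUV Z) hc)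
      rw [hVeq]
      exact hUle.trans hmono
    · intro U m
      have hset : {r : ℝ | ∃ Z : Lp ℝ ⊤ μ, ρ Z ≤ 0 ∧ r = esssup μ (U + cst μ m - Z)} =
          (fun r => r + m) '' {r : ℝ | ∃ Z : Lp ℝ ⊤ μ, ρ Z ≤ 0 ∧ r = esssup μ (U - Z)} := by
        ext r
        simp only [Set.mem_image, Set.mem_setOf_eq]
        constructor
        · rintro ⟨Z, hZ, rfl⟩
          refine ⟨esssup μ (U - Z), ⟨Z, hZ, rfl⟩, ?_⟩
          rw [← esssup_add_cst μ (U - Z) m]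
          congr 1; abel
        · rintro ⟨s, ⟨Z, hZ, rfl⟩, rfl⟩
          refine ⟨Z, hZ, ?_⟩
          rw [← esssup_add_cst μ (U - Z) m]
          congr 1; abel
      have h1 := h (U + cst μ m)
      have h2 := h U
      rw [hset] at h1
      have h3 : IsLeast ((fun r => r + m) ''
          {r : ℝ | ∃ Z : Lp ℝ ⊤ μ, ρ Z ≤ 0 ∧ r = esssup μ (U - Z)}) (ρ U + m) := by
        constructor
        · exact ⟨ρ U, h2.1, rfl⟩
        · rintro r ⟨s, hs, rfl⟩
          exact add_le_add_left (h2.2 hs) m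
      exact h1.unique h3
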